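/- Let {E_i}_{i=0}^{M-1} and {F_j}_{j=0}^{N-1} be POVMs on a finite-dimensional Hilbert space H (E_i ⪰ 0, Σ_i E_i = I; similarly for F), with measurement operators A_i = E_i^{1/2}, such that {F_j} is a coarse-graining of {E_i}: for every j there is a set Λ_j with F_j = Σ_{i∈Λ_j} E_i and the Λ_j partition {0,…,M-1}. Then for every density operator ρ, Σ_i Tr[(E_i^{1/2} √ρ E_i^{1/2})^2] ≤ Σ_j Tr[(F_j^{1/2} √ρ F_j^{1/2})^2]. -/

import Mathlib

open scoped ComplexOrder

open Classical in
/-- The positive semidefinite square root of a matrix (zero if not psd). -/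
noncomputable def msqrt {d : ℕ} (ρ : Matrix (Fin d) (Fin d) ℂ) : Matrix (Fin d) (Fin d) ℂ :=
  if h : ρ.PosSemidef then
    (h.1.eigenvectorUnitary : Matrix (Fin d) (Fin d) ℂ) *
      Matrix.diagonal ((↑) ∘ (√·) ∘ h.1.eigenvalues) *
      (star h.1.eigenvectorUnitary : Matrix (Fin d) (Fin d) ℂ)
  else 0

/-!
Write `X = √ρ` and expand `Tr(F_j X F_j X)` with `F_j = Σ_{i ∈ Λ_j} E_i`: it is the sum of
`Tr(E_i X E_{i'} X)` over all pairs `i, i' ∈ Λ_j`. The diagonal pairs give the left-hand side, and every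
off-diagonal term is nonnegative, because `Tr(E_i X E_{i'} X) = Tr((X E_i X) E_{i'})` is the trace of a
product of two positive semidefinite matrices.
-/

open scoped MatrixOrder

namespace Matrix

variable {n 𝕜 : Type*} [Fintype n] [RCLike 𝕜]

lemma trace_sq_mul_mul_of_mul_self_eq [DecidableEq n] {R : Type*} [CommRing R] {S A : Matrix n n R}
    (hS : S * S = A) (X : Matrix n n R) : ((S * X * S) ^ 2).trace = (A * X * A * X).trace := by
  rw [sq, ← hS, show S * X * S * (S * X * S) = (S * X * (S * S) * X) * S by noncomm_ring,
    trace_mul_comm, show S * (S * X * (S * S) * X) = S * S * X * (S * S) * X by noncomm_ring]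

lemma PosSemidef.trace_mul_nonneg [DecidableEq n] {P Q : Matrix n n 𝕜} (hP : P.PosSemidef)
    (hQ : Q.PosSemidef) : 0 ≤ (P * Q).trace := by
  have hPQ : (P * Q).trace = (CFC.sqrt P * Q * (CFC.sqrt P)ᴴ).trace := by
    rw [(nonneg_iff_posSemidef.mp (CFC.sqrt_nonneg P)).isHermitian.eq]
    conv_lhs => rw [← CFC.sqrt_mul_sqrt_self P hP.nonneg, mul_assoc, trace_mul_comm]
  exact hPQ ▸ (hQ.mul_mul_conjTranspose_same _).trace_nonneg

lemma IsHermitian.trace_mul_mul_mul_nonneg {A B X : Matrix n n 𝕜} (hX : X.IsHermitian)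
    (hA : A.PosSemidef) (hB : B.PosSemidef) : 0 ≤ (A * X * B * X).trace := by
  classical
  have hXAX : (X * A * Xᴴ).PosSemidef := hA.mul_mul_conjTranspose_same X
  rw [hX.eq] at hXAX
  rw [trace_mul_comm, ← mul_assoc, ← mul_assoc]
  exact hXAX.trace_mul_nonneg hB

lemma IsHermitian.sum_trace_mul_mul_mul_le {ι : Type*} {X : Matrix n n 𝕜} (hX : X.IsHermitian)
    {E : ι → Matrix n n 𝕜} (hE : ∀ i, (E i).PosSemidef) (s : Finset ι) :
    ∑ i ∈ s, (E i * X * E i * X).trace ≤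
      ((∑ i ∈ s, E i) * X * (∑ i ∈ s, E i) * X).trace := by
  have hexpand : ((∑ i ∈ s, E i) * X * (∑ i ∈ s, E i) * X).trace =
      ∑ j ∈ s, ∑ i ∈ s, (E i * X * E j * X).trace := by
    simp only [Finset.sum_mul, Finset.mul_sum, trace_sum]
  rw [hexpand]
  exact Finset.sum_le_sum fun j hj =>
    Finset.single_le_sum (fun i _ => hX.trace_mul_mul_mul_nonneg (hE i) (hE j)) hj

end Matrix

lemma msqrt_eq_cfcSqrt {d : ℕ} {A : Matrix (Fin d) (Fin d) ℂ} (hA : A.PosSemidef) :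
    msqrt A = CFC.sqrt A := by
  rw [msqrt, dif_pos hA, CFC.sqrt_eq_real_sqrt A hA.nonneg, cfcₙ_eq_cfc, hA.1.cfc_eq,
    Matrix.IsHermitian.cfc, Unitary.conjStarAlgAut_apply]
  rfl

lemma msqrt_mul_msqrt {d : ℕ} {A : Matrix (Fin d) (Fin d) ℂ} (hA : A.PosSemidef) :
    msqrt A * msqrt A = A := by
  rw [msqrt_eq_cfcSqrt hA, CFC.sqrt_mul_sqrt_self A hA.nonneg]

lemma isHermitian_msqrt {d : ℕ} (A : Matrix (Fin d) (Fin d) ℂ) : (msqrt A).IsHermitian := by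
  by_cases hA : A.PosSemidef
  · rw [msqrt_eq_cfcSqrt hA]
    exact (Matrix.nonneg_iff_posSemidef.mp (CFC.sqrt_nonneg A)).isHermitian
  · rw [msqrt, dif_neg hA]
    exact Matrix.isHermitian_zero

theorem povm_coherence_coarse_graining_general {d M N : ℕ}
    (E : Fin M → Matrix (Fin d) (Fin d) ℂ) (F : Fin N → Matrix (Fin d) (Fin d) ℂ)
    (hE : ∀ i, (E i).PosSemidef)
    (hF : ∀ j, (F j).PosSemidef)
    (Λ : Fin N → Finset (Fin M))
    (hdisj : ∀ j j', j ≠ j' → Disjoint (Λ j) (Λ j'))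
    (hcover : Finset.univ.biUnion Λ = Finset.univ)
    (hcoarse : ∀ j, F j = ∑ i ∈ Λ j, E i)
    (ρ : Matrix (Fin d) (Fin d) ℂ) :
    ∑ i, ((msqrt (E i) * msqrt ρ * msqrt (E i)) ^ 2).trace.re ≤
      ∑ j, ((msqrt (F j) * msqrt ρ * msqrt (F j)) ^ 2).trace.re := by
  simp only [Matrix.trace_sq_mul_mul_of_mul_self_eq (msqrt_mul_msqrt (hE _)),
    Matrix.trace_sq_mul_mul_of_mul_self_eq (msqrt_mul_msqrt (hF _)), ← Complex.re_sum]
  rw [← hcover, Finset.sum_biUnion fun j _ j' _ => hdisj j j', Complex.re_sum, Complex.re_sum]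
  refine Finset.sum_le_sum fun j _ => (Complex.le_def.mp ?_).1
  rw [hcoarse j]
  exact (isHermitian_msqrt ρ).sum_trace_mul_mul_mul_le hE (Λ j)

/-- Coarse-graining monotonicity for the POVM generalization of the 1/2-affinity of
coherence: if `{F_j}` is a coarse-graining of the POVM `{E_i}`, then
`Σ_i Tr[(E_i^{1/2} √ρ E_i^{1/2})²] ≤ Σ_j Tr[(F_j^{1/2} √ρ F_j^{1/2})²]`. -/
theorem povm_coherence_coarse_graining {d M N : ℕ}
    (E : Fin M → Matrix (Fin d) (Fin d) ℂ) (F : Fin N → Matrix (Fin d) (Fin d) ℂ)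
    (hE : ∀ i, (E i).PosSemidef) (hEs : ∑ i, E i = 1)
    (hF : ∀ j, (F j).PosSemidef) (hFs : ∑ j, F j = 1)
    (Λ : Fin N → Finset (Fin M))
    (hdisj : ∀ j j', j ≠ j' → Disjoint (Λ j) (Λ j'))
    (hcover : Finset.univ.biUnion Λ = Finset.univ)
    (hcoarse : ∀ j, F j = ∑ i ∈ Λ j, E i)
    (ρ : Matrix (Fin d) (Fin d) ℂ) (hρ : ρ.PosSemidef) (hρtr : ρ.trace = 1) :
    ∑ i, ((msqrt (E i) * msqrt ρ * msqrt (E i)) ^ 2).trace.re ≤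
      ∑ j, ((msqrt (F j) * msqrt ρ * msqrt (F j)) ^ 2).trace.re :=
  povm_coherence_coarse_graining_general E F hE hF Λ hdisj hcover hcoarse ρ
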